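/- (Skipping inequality) Let b, a, a' be anchors with b ≺ a, a ≺ a', and such that a and a' have the same start position in the first coordinate (q_s^a = q_s^{a'}). Then connect(b,a) + connect(a,a') ≥ connect(b,a'). -/
import Mathlib


/-- An anchor: a pair of integer intervals `([qs..qe],[ts..te])`. -/
structure Anchor where
  qs : ℤ
  qe : ℤ
  ts : ℤ
  te : ℤ
deriving DecidableEq

/-- `a` is a well-formed anchor: nonempty intervals satisfying the
    exact-match invariant `qe - qs = te - ts`. -/
def Anchor.Valid (a : Anchor) : Prop :=
  a.qs ≤ a.qe ∧ a.ts ≤ a.te ∧ a.qe - a.qs = a.te - a.ts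

/-- Strict precedence `a ≺ a'`. -/
def strictPrec (a a' : Anchor) : Prop :=
  a.qs ≤ a'.qs ∧ a.qe ≤ a'.qe ∧ a.ts ≤ a'.ts ∧ a.te ≤ a'.te ∧
    (a.qs < a'.qs ∨ a.qe < a'.qe ∨ a.ts < a'.ts ∨ a.te < a'.te)

/-- Weak precedence `a ≺_w a'`. -/
def weakPrec (a a' : Anchor) : Prop :=
  a.qs ≤ a'.qs ∧ a.ts ≤ a'.ts ∧ (a.qs < a'.qs ∨ a.ts < a'.ts)

/-- Strong (ChainX) precedence `a ≺_X a'`. -/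
def chainxPrec (a a' : Anchor) : Prop :=
  a.qs < a'.qs ∧ a.qe < a'.qe ∧ a.ts < a'.ts ∧ a.te < a'.te

/-- Gap cost `gap(a,a') = max(0, qs' - qe - 1, ts' - te - 1)`. -/
def gapCost (a a' : Anchor) : ℤ :=
  max 0 (max (a'.qs - a.qe - 1) (a'.ts - a.te - 1))

/-- Overlap cost `o(a,a') = |max(0, qe - qs' + 1) - max(0, te - ts' + 1)|`. -/
def ovCost (a a' : Anchor) : ℤ :=
  |max 0 (a.qe - a'.qs + 1) - max 0 (a.te - a'.ts + 1)|

/-- `connect(a,a') = gap(a,a') + o(a,a')`. -/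
def connectCost (a a' : Anchor) : ℤ := gapCost a a' + ovCost a a'

/-- The diagonal of an anchor: `diag(a) = qs - ts`. -/
def Anchor.diag (a : Anchor) : ℤ := a.qs - a.ts


set_option maxHeartbeats 2000000

/-- Skipping an anchor with the same start position in the first
    coordinate does not decrease the connection cost. -/
theorem skipping_inequality (b a a' : Anchor)
    (hb : b.Valid) (ha : a.Valid) (ha' : a'.Valid)
    (hba : strictPrec b a) (haa' : strictPrec a a')
    (hqs : a.qs = a'.qs) :
    connectCost b a + connectCost a a' ≥ connectCost b a' := by
  obtain ⟨b1,b2,b3⟩ := hb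
  obtain ⟨a1,a2,a3⟩ := ha
  obtain ⟨c1,c2,c3⟩ := ha'
  obtain ⟨p1,p2,p3,p4,_⟩ := hba
  obtain ⟨q1,q2,q3,q4,_⟩ := haa'
  simp only [connectCost, gapCost, ovCost, ge_iff_le]
  rcases abs_cases (max 0 (b.qe - a.qs + 1) - max 0 (b.te - a.ts + 1)) with ⟨h1,_⟩|⟨h1,_⟩ <;>
  rcases abs_cases (max 0 (a.qe - a'.qs + 1) - max 0 (a.te - a'.ts + 1)) with ⟨h2,_⟩|⟨h2,_⟩ <;>
  rcases abs_cases (max 0 (b.qe - a'.qs + 1) - max 0 (b.te - a'.ts + 1)) with ⟨h3,_⟩|⟨h3,_⟩ <;>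
  omega
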